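/- For the Pauli channel E_XYZ(ρ) = (XρX + YρY + ZρZ)/3, the sub-channel C₋ of its quantum SWITCH equals E_XYZ itself; that is, (2·(1/9) ZρZ + 2·(1/9) XρX + 2·(1/9) YρY)/q₋ = E_XYZ(ρ) with q₋ = 2/3, and q₊ C₊(ρ) = (1/3) ρ, so the switched channel equals (1/3) ρ ⊗ |+⟩⟨+| + (2/3) E_XYZ(ρ) ⊗ |−⟩⟨−|. -/
import Mathlib


open Matrix Kronecker
open scoped ComplexOrder

noncomputable def PX : Matrix (Fin 2) (Fin 2) ℂ := !![0, 1; 1, 0]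
noncomputable def PY : Matrix (Fin 2) (Fin 2) ℂ := !![0, -Complex.I; Complex.I, 0]
noncomputable def PZ : Matrix (Fin 2) (Fin 2) ℂ := !![1, 0; 0, -1]
noncomputable def proj0 : Matrix (Fin 2) (Fin 2) ℂ := !![1, 0; 0, 0]
noncomputable def proj1 : Matrix (Fin 2) (Fin 2) ℂ := !![0, 0; 0, 1]
noncomputable def projPlus : Matrix (Fin 2) (Fin 2) ℂ := (1/2 : ℂ) • !![1, 1; 1, 1]
noncomputable def projMinus : Matrix (Fin 2) (Fin 2) ℂ := (1/2 : ℂ) • !![1, -1; -1, 1]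

/-- The nontrivial Pauli unitaries X, Y, Z. -/
noncomputable def pauli3 : Fin 3 → Matrix (Fin 2) (Fin 2) ℂ := ![PX, PY, PZ]

/-- The channel E_XYZ(ρ) = (XρX + YρY + ZρZ)/3. -/
noncomputable def EXYZ (ρ : Matrix (Fin 2) (Fin 2) ℂ) : Matrix (Fin 2) (Fin 2) ℂ :=
  (1/3 : ℂ) • (PX * ρ * PX + PY * ρ * PY + PZ * ρ * PZ)

/-- The un-normalized SWITCH Kraus operators σᵢσⱼ ⊗ |0⟩⟨0| + σⱼσᵢ ⊗ |1⟩⟨1|. -/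
noncomputable def Msw (i j : Fin 3) : Matrix (Fin 2 × Fin 2) (Fin 2 × Fin 2) ℂ :=
  (pauli3 i * pauli3 j) ⊗ₖ proj0 + (pauli3 j * pauli3 i) ⊗ₖ proj1


private lemma kron_conjT (A B : Matrix (Fin 2) (Fin 2) ℂ) : (A ⊗ₖ B)ᴴ = Aᴴ ⊗ₖ Bᴴ := by
  ext ⟨a,b⟩ ⟨c,d⟩
  simp [Matrix.conjTranspose_apply, Matrix.kroneckerMap_apply, mul_comm]

private lemma conj_kron (A B ρ σ : Matrix (Fin 2) (Fin 2) ℂ) :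
    (A ⊗ₖ B) * (ρ ⊗ₖ σ) * (A ⊗ₖ B)ᴴ = (A * ρ * Aᴴ) ⊗ₖ (B * σ * Bᴴ) := by
  rw [kron_conjT, Matrix.mul_kronecker_mul, Matrix.mul_kronecker_mul]

private lemma Msw_diag (i : Fin 3) : Msw i i = 1 := by
  have h : pauli3 i * pauli3 i = 1 := by
    fin_cases i <;>
      simp [pauli3, PX, PY, PZ] <;>
      · ext a b; fin_cases a <;> fin_cases b <;>
          simp [Matrix.mul_apply, Fin.sum_univ_two, Matrix.one_apply]
  rw [Msw, h]
  ext ⟨a,b⟩ ⟨c,d⟩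
  fin_cases a <;> fin_cases b <;> fin_cases c <;> fin_cases d <;>
    simp [Matrix.kroneckerMap_apply, proj0, proj1, Matrix.one_apply, Prod.ext_iff]

private noncomputable def iZ : Matrix (Fin 2) (Fin 2) ℂ := !![Complex.I, 0; 0, -Complex.I]

private lemma Msw_form (i j k : Fin 3) (c : ℂ)
    (h1 : pauli3 i * pauli3 j = c • pauli3 k) (h2 : pauli3 j * pauli3 i = (-c) • pauli3 k) :
    Msw i j = pauli3 k ⊗ₖ (c • proj0 - c • proj1) := by
  rw [Msw, h1, h2, Matrix.smul_kronecker, Matrix.smul_kronecker]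
  ext ⟨a,b⟩ ⟨c',d⟩
  fin_cases b <;> fin_cases d <;>
    simp [Matrix.kroneckerMap_apply, proj0, proj1, Matrix.sub_apply, Matrix.smul_apply,
      smul_eq_mul] <;> ring

private lemma pm (c : ℂ) (hc : c * star c = 1) :
    (c • proj0 - c • proj1) * projPlus * (c • proj0 - c • proj1)ᴴ = projMinus := by
  have hc' : c * (starRingEnd ℂ) c = 1 := hc
  ext a b
  fin_cases a <;> fin_cases b <;>
    simp [proj0, proj1, projPlus, projMinus, Matrix.mul_apply, Fin.sum_univ_two,
      Matrix.conjTranspose_apply, Matrix.sub_apply, Matrix.smul_apply, smul_eq_mul] <;>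
    first
      | ring1
      | linear_combination (1/2 : ℂ) * hc'

private lemma term_off (i j k : Fin 3) (c : ℂ) (hc : c * star c = 1)
    (h1 : pauli3 i * pauli3 j = c • pauli3 k) (h2 : pauli3 j * pauli3 i = (-c) • pauli3 k)
    (hH : (pauli3 k)ᴴ = pauli3 k) (ρ : Matrix (Fin 2) (Fin 2) ℂ) :
    Msw i j * (ρ ⊗ₖ projPlus) * (Msw i j)ᴴ = (pauli3 k * ρ * pauli3 k) ⊗ₖ projMinus := by
  rw [Msw_form i j k c h1 h2, conj_kron, hH, pm c hc]

private lemma pauliH : (PX)ᴴ = PX ∧ (PY)ᴴ = PY ∧ (PZ)ᴴ = PZ := by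
  refine ⟨?_, ?_, ?_⟩ <;>
    · ext a b; fin_cases a <;> fin_cases b <;> simp [PX, PY, PZ, Matrix.conjTranspose_apply]

private lemma mulXY : PX * PY = Complex.I • PZ := by
  ext a b; fin_cases a <;> fin_cases b <;>
    simp [PX, PY, PZ, Matrix.mul_apply, Fin.sum_univ_two]
private lemma mulYX : PY * PX = (-Complex.I) • PZ := by
  ext a b; fin_cases a <;> fin_cases b <;>
    simp [PX, PY, PZ, Matrix.mul_apply, Fin.sum_univ_two]
private lemma mulYZ : PY * PZ = Complex.I • PX := by
  ext a b; fin_cases a <;> fin_cases b <;>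
    simp [PX, PY, PZ, Matrix.mul_apply, Fin.sum_univ_two]
private lemma mulZY : PZ * PY = (-Complex.I) • PX := by
  ext a b; fin_cases a <;> fin_cases b <;>
    simp [PX, PY, PZ, Matrix.mul_apply, Fin.sum_univ_two]
private lemma mulZX : PZ * PX = Complex.I • PY := by
  ext a b; fin_cases a <;> fin_cases b <;>
    simp [PX, PY, PZ, Matrix.mul_apply, Fin.sum_univ_two]
private lemma mulXZ : PX * PZ = (-Complex.I) • PY := by
  ext a b; fin_cases a <;> fin_cases b <;>
    simp [PX, PY, PZ, Matrix.mul_apply, Fin.sum_univ_two]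

/-- For the Pauli channel E_XYZ, the sub-channel C₋ of the quantum SWITCH equals E_XYZ
itself, and the switched channel is ρ ↦ (1/3) ρ ⊗ |+⟩⟨+| + (2/3) E_XYZ(ρ) ⊗ |−⟩⟨−|. -/
theorem stmt3 (ρ : Matrix (Fin 2) (Fin 2) ℂ) (hρ : ρ.PosSemidef) (htr : ρ.trace = 1) :
    (3/2 : ℂ) • ((2 * (1/9) : ℂ) • (PZ * ρ * PZ) + (2 * (1/9) : ℂ) • (PX * ρ * PX)
        + (2 * (1/9) : ℂ) • (PY * ρ * PY)) = EXYZ ρ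
    ∧ ∑ i : Fin 3, ∑ j : Fin 3,
        (1/9 : ℂ) • (Msw i j * (ρ ⊗ₖ projPlus) * (Msw i j)ᴴ)
      = (1/3 : ℂ) • (ρ ⊗ₖ projPlus) + (2/3 : ℂ) • (EXYZ ρ ⊗ₖ projMinus) := by
  have hI : Complex.I * star Complex.I = 1 := by
    simp [Complex.star_def, Complex.conj_I, Complex.I_mul_I]
  have hnI : (-Complex.I) * star (-Complex.I) = 1 := by
    simp [Complex.star_def, Complex.conj_I, Complex.I_mul_I]
  obtain ⟨hX, hY, hZ⟩ := pauliH
  constructor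
  · ext i j
    simp only [EXYZ, Matrix.smul_apply, Matrix.add_apply, smul_eq_mul]
    ring
  · have p01 : pauli3 (0:Fin 3) = PX := rfl
    have p1 : pauli3 (1:Fin 3) = PY := rfl
    have p2 : pauli3 (2:Fin 3) = PZ := rfl
    have t01 := term_off 0 1 2 Complex.I hI (by rw [p01, p1, p2, mulXY])
      (by rw [p01, p1, p2, mulYX]) (by rw [p2, hZ]) ρ
    have t10 := term_off 1 0 2 (-Complex.I) hnI (by rw [p01, p1, p2, mulYX])
      (by rw [p01, p1, p2, mulXY, neg_neg]) (by rw [p2, hZ]) ρ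
    have t12 := term_off 1 2 0 Complex.I hI (by rw [p01, p1, p2, mulYZ])
      (by rw [p01, p1, p2, mulZY]) (by rw [p01, hX]) ρ
    have t21 := term_off 2 1 0 (-Complex.I) hnI (by rw [p01, p1, p2, mulZY])
      (by rw [p01, p1, p2, mulYZ, neg_neg]) (by rw [p01, hX]) ρ
    have t20 := term_off 2 0 1 Complex.I hI (by rw [p01, p1, p2, mulZX])
      (by rw [p01, p1, p2, mulXZ]) (by rw [p1, hY]) ρ
    have t02 := term_off 0 2 1 (-Complex.I) hnI (by rw [p01, p1, p2, mulXZ])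
      (by rw [p01, p1, p2, mulZX, neg_neg]) (by rw [p1, hY]) ρ
    have tdiag : ∀ i : Fin 3, Msw i i * (ρ ⊗ₖ projPlus) * (Msw i i)ᴴ = ρ ⊗ₖ projPlus := by
      intro i; rw [Msw_diag]; simp
    rw [Fin.sum_univ_three]
    rw [Fin.sum_univ_three, Fin.sum_univ_three, Fin.sum_univ_three]
    rw [tdiag 0, tdiag 1, tdiag 2, t01, t10, t12, t21, t20, t02, p01, p1, p2]
    rw [EXYZ, Matrix.smul_kronecker, Matrix.add_kronecker, Matrix.add_kronecker]
    module
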